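/- With ν̄ = ν + ε·𝟙_{[0,∞)} as above, define ν⁺(z) = ν(z) for z ≥ 0 and ν⁺(z) = −∞ for z < 0, and ν⁻(z) = min(ν(z), ν(0⁻)) (i.e., using only mass strictly left of 0), so that L_ν(x,t) = max(L_{ν⁺}(x,t), L_{ν⁻}(x,t)) for x ≥ 0. Then L_{ν̄}(x,t) = L_ν(x,t) + ε if and only if L_{ν⁺}(x,t) ≥ L_{ν⁻}(x,t). -/

import Mathlib

/-!
Shifting the profile by `ε` on `[0, ∞)` raises the supremum over `[0, x]` by exactly `ε` and leaves
the supremum over `(-∞, 0)` unchanged, so `L_{ν̄} = max (L_{ν⁺} + ε) L_{ν⁻}`. Since `ε > 0`, this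
equals `max L_{ν⁺} L_{ν⁻} + ε` exactly when the first term realises the maximum.
-/

theorem setOf_add_ite_eq_image_union {β γ : Type*} [LinearOrder β] [AddZeroClass γ]
    (φ : β → γ) {c x : β} (hcx : c ≤ x) (ε : γ) :
    {y | ∃ z ≤ x, y = φ z + if c ≤ z then ε else 0} =
      (· + ε) '' {y | ∃ z, c ≤ z ∧ z ≤ x ∧ y = φ z} ∪ {y | ∃ z, z < c ∧ y = φ z} := by
  ext y
  simp only [Set.mem_ofPred_eq, Set.mem_union, Set.mem_image]
  constructor
  · rintro ⟨z, hzx, rfl⟩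
    by_cases hcz : c ≤ z
    · exact Or.inl ⟨φ z, ⟨z, hcz, hzx, rfl⟩, by rw [if_pos hcz]⟩
    · exact Or.inr ⟨z, not_le.mp hcz, by rw [if_neg hcz, add_zero]⟩
  · rintro (⟨_, ⟨z, hcz, hzx, rfl⟩, rfl⟩ | ⟨z, hzc, rfl⟩)
    · exact ⟨z, hzx, by rw [if_pos hcz]⟩
    · exact ⟨z, hzc.le.trans hcx, by rw [if_neg (not_le.mpr hzc), add_zero]⟩

section

variable {β γ : Type*} [LinearOrder β] [AddCommGroup γ] [LinearOrder γ] [IsOrderedAddMonoid γ]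

theorem isLUB_add_ite {φ : β → γ} {c x : β} (hcx : c ≤ x) (ε : γ) {a b : γ}
    (ha : IsLUB {y | ∃ z, c ≤ z ∧ z ≤ x ∧ y = φ z} a) (hb : IsLUB {y | ∃ z, z < c ∧ y = φ z} b) :
    IsLUB {y | ∃ z ≤ x, y = φ z + if c ≤ z then ε else 0} (max (a + ε) b) := by
  rw [setOf_add_ite_eq_image_union φ hcx ε]
  exact ((OrderIso.addRight ε).isLUB_image'.2 ha).union hb

theorem max_add_left_eq_max_add_iff {ε : γ} (hε : 0 < ε) {a b : γ} :
    max (a + ε) b = max a b + ε ↔ b ≤ a := by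
  rcases le_or_gt b a with hba | hab
  · simp only [hba, iff_true, max_eq_left hba]
    exact max_eq_left (hba.trans (le_add_of_nonneg_right hε.le))
  · simp only [not_le.mpr hab, iff_false, max_eq_right hab.le]
    exact (max_lt (add_lt_add_left hab ε) (lt_add_of_pos_right b hε)).ne

end

theorem second_class_characterization_general (ν : ℝ → ℝ) (ε : ℝ) (hε : 0 < ε)
    (L : ℝ → ℝ → ℝ → ℝ)
    (x t : ℝ) (hx : 0 ≤ x) (Lp Lm Lν Lb : ℝ)
    (hp : IsLUB {y | ∃ z, 0 ≤ z ∧ z ≤ x ∧ y = ν z + L z x t} Lp)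
    (hm : IsLUB {y | ∃ z, z < 0 ∧ y = ν z + L z x t} Lm)
    (hb : IsLUB {y | ∃ z ≤ x, y = (ν z + if 0 ≤ z then ε else 0) + L z x t} Lb)
    (hmax : Lν = max Lp Lm) :
    Lb = Lν + ε ↔ Lm ≤ Lp := by
  simp only [add_right_comm (ν _)] at hb
  rw [hb.unique (isLUB_add_ite hx ε hp hm), hmax]
  exact max_add_left_eq_max_add_iff hε

/-- Characterization of the second-class particle location:
L_{ν̄}(x,t) = L_ν(x,t) + ε if and only if L_{ν⁺}(x,t) ≥ L_{ν⁻}(x,t). -/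
theorem second_class_characterization (ν : ℝ → ℝ) (hν : Monotone ν) (ε : ℝ) (hε : 0 < ε)
    (L : ℝ → ℝ → ℝ → ℝ) (hL : ∀ z x t, 0 ≤ L z x t)
    (x t : ℝ) (hx : 0 ≤ x) (Lp Lm Lν Lb : ℝ)
    (hp : IsLUB {y | ∃ z, 0 ≤ z ∧ z ≤ x ∧ y = ν z + L z x t} Lp)
    (hm : IsLUB {y | ∃ z, z < 0 ∧ y = ν z + L z x t} Lm)
    (hn : IsLUB {y | ∃ z ≤ x, y = ν z + L z x t} Lν)
    (hb : IsLUB {y | ∃ z ≤ x, y = (ν z + if 0 ≤ z then ε else 0) + L z x t} Lb)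
    (hmax : Lν = max Lp Lm) :
    Lb = Lν + ε ↔ Lm ≤ Lp :=
  second_class_characterization_general ν ε hε L x t hx Lp Lm Lν Lb hp hm hb hmax
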